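/- arXiv:2207.12368 — 4 statements merged into one kernel-verified Lean document; each statement's English description precedes it below -/
import Mathlib

section
/- Let G and H be e-free edge-labelled graphs, R ⊆ X_G × X_H, H' a contraction of H, and C₁,…,C_q distinct e-connected components of H' whose union is {T₁,…,T_p}. Let S = (S₁,…,S_p) be pairwise disjoint subsets of V_G with S ⪯_R T (R-feasible), and let I_j ⊆ [p] index the elements of C_j. Then R^S_T = R^{S_{I₁}}_{T_{I₁}} ⋈ ⋯ ⋈ R^{S_{I_q}}_{T_{I_q}}, i.e., the R-morphisms from G[∪S] whose images of each S_i lie in T_i are exactly the joins of such R-morphisms restricted to each e-connected component. -/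
/-- `R^S_T` over an explicit domain `D`: the set of `R`-morphisms `f` from the induced
subgraph of `G` on `D` to `H` such that `f(S i) ⊆ T i` for every index `i`. -/
def RSetOn {VG VH XG XH ι : Type*} (lG : VG → VG → XG) (lH : VH → VH → XH)
    (R : Set (XG × XH)) (D : Set VG) (S : ι → Set VG) (T : ι → Set VH) :
    Set (↥D → VH) :=
  {f | (∀ u v : ↥D, (lG ↑u ↑v, lH (f u) (f v)) ∈ R) ∧
       ∀ i, ∀ u : ↥D, (u : VG) ∈ S i → f u ∈ T i}

/-- Decomposition of `R^S_T` along the `e`-connected components of a contraction of `H`: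
if `T = (T₁,…,T_p)` are distinct vertices of a contraction of `H`, `S ⪯_R T`
(`R`-feasible), and `I₁,…,I_q` partition `[p]` into the `e`-connected components
(pairs in different components have a uniform, non-`e`, label; each component is
connected by `e`-edges), then `f ∈ R^S_T` iff for each component `j` the restriction
of `f` to `⋃_{i ∈ I_j} S_i` lies in `R^{S_{I_j}}_{T_{I_j}}`; i.e. `R^S_T` is the join
of the `R^{S_{I_j}}_{T_{I_j}}`. -/
theorem stmt_13 {VG VH XG XH : Type*} (lG : VG → VG → XG) (lH : VH → VH → XH)
    (R : Set (XG × XH)) {p q : ℕ}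
    (T : Fin p → Set VH) (hTne : ∀ i, (T i).Nonempty)
    (hTdisj : Pairwise (Function.onFun Disjoint T))
    (S : Fin p → Set VG) (hSdisj : Pairwise (Function.onFun Disjoint S))
    (hfeas : ∀ i i' : Fin p, ∀ x : XH, (∀ u ∈ T i, ∀ v ∈ T i', lH u v = x) →
      ∀ u ∈ S i, ∀ v ∈ S i', (lG u v, x) ∈ R)
    (I : Fin q → Set (Fin p))
    (hpart : ∀ i : Fin p, ∃! j : Fin q, i ∈ I j)
    (hcross : ∀ j j' : Fin q, j ≠ j' → ∀ i ∈ I j, ∀ i' ∈ I j',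
      ∃ x : XH, ∀ u ∈ T i, ∀ v ∈ T i', lH u v = x)
    (hconn : ∀ j : Fin q, ∀ i ∈ I j, ∀ i' ∈ I j,
      Relation.ReflTransGen (fun a b : Fin p => a ∈ I j ∧ b ∈ I j ∧
        (¬ (∃ x : XH, ∀ u ∈ T a, ∀ v ∈ T b, lH u v = x) ∨
         ¬ (∃ x : XH, ∀ u ∈ T b, ∀ v ∈ T a, lH u v = x))) i i')
    (f : ↥(⋃ j, S j) → VH) :
    f ∈ RSetOn lG lH R (⋃ j, S j) S T ↔
      ∀ j : Fin q,
        (f ∘ Set.inclusion (show (⋃ i : ↥(I j), S ↑i) ⊆ ⋃ j, S j from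
            Set.iUnion_subset fun i => Set.subset_iUnion S ↑i)) ∈
          RSetOn lG lH R (⋃ i : ↥(I j), S ↑i)
            (fun i : ↥(I j) => S ↑i) (fun i : ↥(I j) => T ↑i) := by
  constructor
  · rintro ⟨h1, h2⟩ j
    refine ⟨fun u v => ?_, fun i u hu => ?_⟩
    · exact h1 (Set.inclusion _ u) (Set.inclusion _ v)
    · exact h2 i (Set.inclusion _ u) hu
  · intro h
    have key : ∀ u : ↥(⋃ j, S j), ∀ i : Fin p, (u : VG) ∈ S i → f u ∈ T i := by
      intro u i hu
      obtain ⟨j, hij, -⟩ := hpart i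
      have hmem : (u : VG) ∈ ⋃ i' : ↥(I j), S ↑i' :=
        Set.mem_iUnion.mpr ⟨⟨i, hij⟩, hu⟩
      have := (h j).2 ⟨i, hij⟩ ⟨↑u, hmem⟩ hu
      simpa [Set.inclusion, Subtype.ext_iff] using this
    refine ⟨fun u v => ?_, fun i u hu => key u i hu⟩
    obtain ⟨i, hu⟩ := Set.mem_iUnion.mp u.2
    obtain ⟨i', hv⟩ := Set.mem_iUnion.mp v.2
    obtain ⟨j, hij, -⟩ := hpart i
    obtain ⟨j', hij', -⟩ := hpart i'
    by_cases hjj : j = j'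
    · subst hjj
      have hmu : (u : VG) ∈ ⋃ i'' : ↥(I j), S ↑i'' := Set.mem_iUnion.mpr ⟨⟨i, hij⟩, hu⟩
      have hmv : (v : VG) ∈ ⋃ i'' : ↥(I j), S ↑i'' := Set.mem_iUnion.mpr ⟨⟨i', hij'⟩, hv⟩
      have := (h j).1 ⟨↑u, hmu⟩ ⟨↑v, hmv⟩
      simpa [Set.inclusion, Subtype.ext_iff] using this
    · obtain ⟨x, hx⟩ := hcross j j' hjj i hij i' hij'
      have hfu : f u ∈ T i := key u i hu
      have hfv : f v ∈ T i' := key v i' hv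
      have : lH (f u) (f v) = x := hx _ hfu _ hfv
      rw [this]
      exact hfeas i i' x hx _ hu _ hv
end

section
/- Let G and H be e-free edge-labelled graphs, R ⊆ X_G × X_H, T₀,…,T_{p-1} nonempty subsets of V_H, S₀,…,S_{p-1} pairwise disjoint subsets of V_G, and S_p ⊎ S_{p+1} = S₀ a partition of S₀ into nonempty parts. Then R̄^{S₁,…,S_{p-1},S₀}_{T₁,…,T_{p-1},T₀} = ⨄ over pairs (T_p, T_{p+1}) of nonempty sets with T_p ∪ T_{p+1} = T₀ of the sets R̄^{S₁,…,S_{p-1},S_p,S_{p+1}}_{T₁,…,T_{p-1},T_p,T_{p+1}}, and this union is disjoint (indexed by the pair (T_p,T_{p+1}), where T_p and T_{p+1} need not be disjoint). -/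
/-- `R̄^S_T` over an explicit domain `D`: the set of `R`-morphisms `f` from the induced
subgraph of `G` on `D` to `H` such that `f(S i) = T i` (image equality) for every `i`. -/
def RbarOn {VG VH XG XH ι : Type*} (lG : VG → VG → XG) (lH : VH → VH → XH)
    (R : Set (XG × XH)) (D : Set VG) (S : ι → Set VG) (T : ι → Set VH) :
    Set (↥D → VH) :=
  {f | (∀ u v : ↥D, (lG ↑u ↑v, lH (f u) (f v)) ∈ R) ∧
       ∀ i, f '' {u : ↥D | (u : VG) ∈ S i} = T i}

/-- Splitting lemma for `R̄`: with `A = (S₁,…,S_{p-1})`, `B = (T₁,…,T_{p-1})`,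
`T₀,…,T_{p-1}` nonempty subsets of `V_H`, `S₀,…,S_{p-1}` pairwise disjoint subsets
of `V_G`, and a partition `S_p ⊎ S_{p+1} = S₀` into nonempty parts, the set
`R̄^{S₁,…,S_{p-1},S₀}_{T₁,…,T_{p-1},T₀}` is the union over pairs `(T_p, T_{p+1})` of
nonempty (not necessarily disjoint) sets with `T_p ∪ T_{p+1} = T₀` of the sets
`R̄^{S₁,…,S_p,S_{p+1}}_{T₁,…,T_p,T_{p+1}}`, and this union is disjoint (indexed by
the pair `(T_p, T_{p+1})`). -/
theorem stmt_16 {VG VH XG XH : Type*} (lG : VG → VG → XG) (lH : VH → VH → XH)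
    (R : Set (XG × XH)) {k : ℕ}
    (A : Fin k → Set VG) (B : Fin k → Set VH)
    (S₀ Sp Sp1 : Set VG) (T₀ : Set VH)
    (hAdisj : Pairwise (Function.onFun Disjoint A))
    (hA0 : ∀ i, Disjoint (A i) S₀)
    (hBne : ∀ i, (B i).Nonempty) (hT0ne : T₀.Nonempty)
    (hSpne : Sp.Nonempty) (hSp1ne : Sp1.Nonempty)
    (hS : Disjoint Sp Sp1) (hSU : Sp ∪ Sp1 = S₀) :
    (∀ f : ↥(S₀ ∪ ⋃ i, A i) → VH,
      f ∈ RbarOn lG lH R (S₀ ∪ ⋃ i, A i)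
          (Sum.elim A fun _ : Unit => S₀) (Sum.elim B fun _ : Unit => T₀) ↔
        ∃ Tp Tp1 : Set VH, Tp.Nonempty ∧ Tp1.Nonempty ∧ Tp ∪ Tp1 = T₀ ∧
          f ∈ RbarOn lG lH R (S₀ ∪ ⋃ i, A i)
            (Sum.elim A fun b : Bool => bif b then Sp else Sp1)
            (Sum.elim B fun b : Bool => bif b then Tp else Tp1)) ∧
    (∀ f : ↥(S₀ ∪ ⋃ i, A i) → VH, ∀ Tp Tp1 Tp' Tp1' : Set VH,
      Tp.Nonempty → Tp1.Nonempty → Tp ∪ Tp1 = T₀ →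
      Tp'.Nonempty → Tp1'.Nonempty → Tp' ∪ Tp1' = T₀ →
      f ∈ RbarOn lG lH R (S₀ ∪ ⋃ i, A i)
          (Sum.elim A fun b : Bool => bif b then Sp else Sp1)
          (Sum.elim B fun b : Bool => bif b then Tp else Tp1) →
      f ∈ RbarOn lG lH R (S₀ ∪ ⋃ i, A i)
          (Sum.elim A fun b : Bool => bif b then Sp else Sp1)
          (Sum.elim B fun b : Bool => bif b then Tp' else Tp1') →
      Tp = Tp' ∧ Tp1 = Tp1') := by
  have key : ∀ f : ↥(S₀ ∪ ⋃ i, A i) → VH,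
      f '' {u | (u : VG) ∈ S₀} =
        f '' {u | (u : VG) ∈ Sp} ∪ f '' {u | (u : VG) ∈ Sp1} := by
    intro f
    rw [← Set.image_union]
    congr 1
    ext u
    simp [← hSU]
  constructor
  · intro f
    constructor
    · rintro ⟨hR, hT⟩
      refine ⟨f '' {u | (u : VG) ∈ Sp}, f '' {u | (u : VG) ∈ Sp1}, ?_, ?_, ?_, hR, ?_⟩
      · obtain ⟨x, hx⟩ := hSpne
        have hxD : x ∈ S₀ ∪ ⋃ i, A i := Or.inl (hSU ▸ Or.inl hx)
        exact ⟨f ⟨x, hxD⟩, ⟨⟨x, hxD⟩, hx, rfl⟩⟩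
      · obtain ⟨x, hx⟩ := hSp1ne
        have hxD : x ∈ S₀ ∪ ⋃ i, A i := Or.inl (hSU ▸ Or.inr hx)
        exact ⟨f ⟨x, hxD⟩, ⟨⟨x, hxD⟩, hx, rfl⟩⟩
      · rw [← key f]; exact hT (Sum.inr ())
      · rintro (i | b)
        · exact hT (Sum.inl i)
        · cases b <;> simp
    · rintro ⟨Tp, Tp1, hTp, hTp1, hU, hR, hT⟩
      refine ⟨hR, ?_⟩
      rintro (i | u)
      · exact hT (Sum.inl i)
      · have h1 := hT (Sum.inr true)
        have h2 := hT (Sum.inr false)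
        simp only [Sum.elim_inr, cond_true, cond_false] at h1 h2
        simp only [Sum.elim_inr, key f, h1, h2, hU]
  · intro f Tp Tp1 Tp' Tp1' _ _ _ _ _ _ h1 h2
    have e1 := h1.2 (Sum.inr true)
    have e1' := h2.2 (Sum.inr true)
    have e2 := h1.2 (Sum.inr false)
    have e2' := h2.2 (Sum.inr false)
    simp only [Sum.elim_inr, cond_true, cond_false] at e1 e1' e2 e2'
    exact ⟨e1 ▸ e1', e2 ▸ e2'⟩
end

section
/- Let Ω be a pre-morphism into a semiring (A,+,×,0_A,1_A) (with a fixed weight matrix W), and let the hypotheses of the disjoint-union and join lemmas hold: T₀,…,T_{p-1} pairwise disjoint subsets of V_H forming (after splitting T₀ = T_p ⊎ T_{p+1}) a union of e-connected components C₁,…,C_q of a contraction H_{k+1} of H, with index sets I_j. Then for pairwise disjoint S₀, S₁,…,S_{p-1} ⊆ V_G: Ω_W(R^{S₁,…,S_{p-1},S₀}_{T₁,…,T_{p-1},T₀}) = Σ over partitions S_p ⊎ S_{p+1} = S₀ with (S₁,…,S_{p+1}) ⪯_R (T₁,…,T_{p+1}) of Π_{j=1}^{q} Ω_W(R^{(S₁,…,S_{p+1})_{I_j}}_{(T₁,…,T_{p+1})_{I_j}}),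 where Σ and Π denote iterated semiring addition and multiplication. -/
/-- `S ⪯_R T` (`R`-feasibility): whenever the contraction label of `(T_i, T_{i'})` is not
`e` (i.e. all pairs in `T_i × T_{i'}` carry the same label `x` in `H`), every pair in
`S_i × S_{i'}` has its `G`-label related to `x` by `R`. -/
def Feasible {VG VH XG XH ι : Type*} (lG : VG → VG → XG) (lH : VH → VH → XH)
    (R : Set (XG × XH)) (S : ι → Set VG) (T : ι → Set VH) : Prop :=
  ∀ i i' : ι, ∀ x : XH, (∀ u ∈ T i, ∀ v ∈ T i', lH u v = x) →
    ∀ u ∈ S i, ∀ v ∈ S i', (lG u v, x) ∈ R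

open Function Set

abbrev splitFamily {α ι : Type*} (A : ι → Set α) (X Y : Set α) : ι ⊕ Bool → Set α :=
  Sum.elim A fun b => bif b then X else Y

theorem pairwise_disjoint_splitFamily {α ι : Type*} {A : ι → Set α} {X Y : Set α}
    (hA : Pairwise (onFun Disjoint A)) (hAXY : ∀ i, Disjoint (A i) (X ∪ Y))
    (hXY : Disjoint X Y) : Pairwise (onFun Disjoint (splitFamily A X Y)) := by
  rintro (i | (_ | _)) (i' | (_ | _)) hne <;>
    simp only [onFun, splitFamily, Sum.elim_inl, Sum.elim_inr, cond_true, cond_false]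
  · exact hA fun h => hne (congrArg Sum.inl h)
  · exact (hAXY i).mono_right subset_union_right
  · exact (hAXY i).mono_right subset_union_left
  · exact ((hAXY i').mono_right subset_union_right).symm
  · exact absurd rfl hne
  · exact hXY.symm
  · exact ((hAXY i').mono_right subset_union_left).symm
  · exact hXY
  · exact absurd rfl hne

theorem iUnion_splitFamily {α ι : Type*} (A : ι → Set α) (X Y : Set α) :
    ⋃ i, splitFamily A X Y i = (⋃ i, A i) ∪ (X ∪ Y) := by
  ext u
  simp only [mem_iUnion, mem_union, Sum.exists, Sum.elim_inl, Sum.elim_inr, Bool.exists_bool,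
    cond_true, cond_false]
  tauto

theorem pairwise_disjoint_iUnion_blocks {α ι κ : Type*} {S : ι → Set α}
    (hS : Pairwise (onFun Disjoint S)) {I : κ → Set ι} (hI : ∀ i, ∃! j, i ∈ I j) :
    Pairwise (onFun Disjoint fun j => ⋃ i : I j, S i) := by
  intro j j' hne
  simp only [onFun, disjoint_iUnion_left, disjoint_iUnion_right]
  intro i i'
  exact hS fun h => hne ((hI i').unique i'.2 (h ▸ i.2))

section RSetOn

variable {VG VH XG XH : Type*} (lG : VG → VG → XG) (lH : VH → VH → XH) (R : Set (XG × XH))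

theorem RSetOn_sumElim_union_eq_biUnion {ι : Type*} (D : Set VG) (A : ι → Set VG)
    (B : ι → Set VH) (S₀ : Set VG) (X Y : Set VH) :
    RSetOn lG lH R D (Sum.elim A fun _ : Unit => S₀) (Sum.elim B fun _ : Unit => X ∪ Y) =
      ⋃ Sp ∈ {Sp | Sp ⊆ S₀},
        RSetOn lG lH R D (splitFamily A Sp (S₀ \ Sp)) (splitFamily B X Y) := by
  ext f
  simp only [mem_iUnion, exists_prop, mem_ofPred_eq]
  constructor
  · rintro ⟨hR, hf⟩
    refine ⟨{u | ∃ h : u ∈ D, u ∈ S₀ ∧ f ⟨u, h⟩ ∈ X}, fun u hu => hu.2.1, hR, ?_⟩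
    rintro (i | (_ | _)) u hu
    · exact hf (Sum.inl i) u hu
    · exact (hf (Sum.inr ()) u hu.1).resolve_left fun hX => hu.2 ⟨u.2, hu.1, hX⟩
    · obtain ⟨_, _, hX⟩ := hu
      exact hX
  · rintro ⟨Sp, hSp, hR, hf⟩
    refine ⟨hR, ?_⟩
    rintro (i | _) u hu
    · exact hf (Sum.inl i) u hu
    · by_cases hup : (u : VG) ∈ Sp
      · exact Or.inl (hf (Sum.inr true) u hup)
      · exact Or.inr (hf (Sum.inr false) u ⟨hu, hup⟩)

theorem pairwiseDisjoint_RSetOn_splitFamily {ι : Type*} {D : Set VG} (A : ι → Set VG)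
    (B : ι → Set VH) {S₀ : Set VG} (hS₀ : S₀ ⊆ D) {X Y : Set VH} (hXY : Disjoint X Y) :
    {Sp | Sp ⊆ S₀}.PairwiseDisjoint fun Sp =>
      RSetOn lG lH R D (splitFamily A Sp (S₀ \ Sp)) (splitFamily B X Y) := by
  -- a vertex of `S₁ \ S₂` would be sent both into `X` and into `Y`
  have key : ∀ S₁ ⊆ S₀, ∀ S₂,
      ∀ f ∈ RSetOn lG lH R D (splitFamily A S₁ (S₀ \ S₁)) (splitFamily B X Y),
      f ∈ RSetOn lG lH R D (splitFamily A S₂ (S₀ \ S₂)) (splitFamily B X Y) → S₁ ⊆ S₂ := by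
    intro S₁ h₁ S₂ f hf₁ hf₂ u hu₁
    by_contra hu₂
    have hu : u ∈ D := hS₀ (h₁ hu₁)
    exact disjoint_left.1 hXY (hf₁.2 (Sum.inr true) ⟨u, hu⟩ hu₁)
      (hf₂.2 (Sum.inr false) ⟨u, hu⟩ ⟨h₁ hu₁, hu₂⟩)
  intro S₁ h₁ S₂ h₂ hne
  refine disjoint_left.2 fun f hf₁ hf₂ => hne ?_
  exact (key S₁ h₁ S₂ f hf₁ hf₂).antisymm (key S₂ h₂ S₁ f hf₂ hf₁)

theorem feasible_of_mem_RSetOn {ι : Type*} {D : Set VG} {S : ι → Set VG} {T : ι → Set VH}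
    (hSD : ∀ i, S i ⊆ D) {f : ↥D → VH} (hf : f ∈ RSetOn lG lH R D S T) :
    Feasible lG lH R S T := by
  intro i i' x hx u hu v hv
  have hR := hf.1 ⟨u, hSD i hu⟩ ⟨v, hSD i' hv⟩
  rwa [hx _ (hf.2 i _ hu) _ (hf.2 i' _ hv)] at hR

/-- For a feasible family, the `R`-condition between different blocks `I j` holds automatically,
because the `T`-classes of different blocks are joined by constant labels. -/
theorem RSetOn_eq_join {ι κ : Type*} {D : Set VG} {S : ι → Set VG} {T : ι → Set VH}
    (hSD : ∀ i, S i ⊆ D) (hDS : D ⊆ ⋃ i, S i) (I : κ → Set ι) (hI : ∀ i, ∃ j, i ∈ I j)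
    (hcross : ∀ j j' : κ, j ≠ j' → ∀ i ∈ I j, ∀ i' ∈ I j', ∃ x : XH,
      ∀ u ∈ T i, ∀ v ∈ T i', lH u v = x)
    (hfeas : Feasible lG lH R S T) :
    RSetOn lG lH R D S T =
      {f | ∀ j, f ∘ inclusion (iUnion_subset fun i : I j => hSD i) ∈
        RSetOn lG lH R (⋃ i : I j, S i) (fun i : I j => S i) (fun i : I j => T i)} := by
  ext f
  constructor
  · intro hf j
    exact ⟨fun u v => hf.1 (inclusion _ u) (inclusion _ v), fun i u hu => hf.2 i _ hu⟩
  · intro hf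
    have hblock : ∀ u : ↥D, ∃ i j, i ∈ I j ∧ (u : VG) ∈ S i := fun u => by
      obtain ⟨i, hi⟩ := mem_iUnion.1 (hDS u.2)
      obtain ⟨j, hj⟩ := hI i
      exact ⟨i, j, hj, hi⟩
    have hT : ∀ i (u : ↥D), (u : VG) ∈ S i → f u ∈ T i := fun i u hu => by
      obtain ⟨j, hj⟩ := hI i
      exact (hf j).2 ⟨i, hj⟩ ⟨u, mem_iUnion.2 ⟨⟨i, hj⟩, hu⟩⟩ hu
    refine ⟨fun u v => ?_, hT⟩
    obtain ⟨i, j, hij, hu⟩ := hblock u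
    obtain ⟨i', j', hij', hv⟩ := hblock v
    by_cases hjj : j = j'
    · subst hjj
      exact (hf j).1 ⟨u, mem_iUnion.2 ⟨⟨i, hij⟩, hu⟩⟩ ⟨v, mem_iUnion.2 ⟨⟨i', hij'⟩, hv⟩⟩
    · obtain ⟨x, hx⟩ := hcross j j' hjj i hij i' hij'
      rw [hx _ (hT i u hu) _ (hT i' v hv)]
      exact hfeas i i' x hx u hu v hv

end RSetOn

section PreMorphism

variable {VG VH A : Type*} [Semiring A] (Ω : (D : Set VG) → Set (↥D → VH) → A)

def IsAdditiveOnDisjoint : Prop :=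
  ∀ (D : Set VG) (F₁ F₂ : Set (↥D → VH)), Disjoint F₁ F₂ → Ω D (F₁ ∪ F₂) = Ω D F₁ + Ω D F₂

/-- `{f | f ∣_{D₁} ∈ F₁ ∧ f ∣_{D₂} ∈ F₂}` is the join `F₁ ⋈ F₂`. -/
def IsMultiplicativeOnJoin : Prop :=
  ∀ (D₁ D₂ : Set VG), Disjoint D₁ D₂ → ∀ T₁ T₂ : Set VH, Disjoint T₁ T₂ →
    ∀ (F₁ : Set (↥D₁ → VH)) (F₂ : Set (↥D₂ → VH)),
    (∀ f ∈ F₁, ∀ u, f u ∈ T₁) → (∀ f ∈ F₂, ∀ u, f u ∈ T₂) →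
    Ω (D₁ ∪ D₂) {f | f ∘ inclusion subset_union_left ∈ F₁ ∧ f ∘ inclusion subset_union_right ∈ F₂} =
      Ω D₁ F₁ * Ω D₂ F₂

variable {Ω} {XG XH : Type*} (lG : VG → VG → XG) (lH : VH → VH → XH) (R : Set (XG × XH))

theorem IsAdditiveOnDisjoint.map_biUnion (hΩ : IsAdditiveOnDisjoint Ω) (hΩ0 : ∀ D, Ω D ∅ = 0)
    {ι : Type*} {D : Set VG} {s : Set ι} (hs : s.Finite) {F : ι → Set (↥D → VH)}
    (hF : s.PairwiseDisjoint F) : Ω D (⋃ x ∈ s, F x) = ∑ᶠ x ∈ s, Ω D (F x) := by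
  induction s, hs using Set.Finite.induction_on with
  | empty => simp [hΩ0]
  | @insert a s ha hs ih =>
    rw [biUnion_insert, hΩ, ih (hF.subset (subset_insert a s)), finsum_mem_insert _ ha hs]
    exact disjoint_iUnion₂_right.2 fun x hx =>
      hF (mem_insert a s) (mem_insert_of_mem a hx) (ne_of_mem_of_not_mem hx ha).symm

theorem IsMultiplicativeOnJoin.map_join (hΩ : IsMultiplicativeOnJoin Ω) {n : ℕ} (D : Set VG)
    (Dm : Fin (n + 1) → Set VG) (hD : D = ⋃ j, Dm j) (hsub : ∀ j, Dm j ⊆ D)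
    (hDm : Pairwise (onFun Disjoint Dm)) (T : Fin (n + 1) → Set VH)
    (hT : Pairwise (onFun Disjoint T)) (F : (j : Fin (n + 1)) → Set (↥(Dm j) → VH))
    (hFT : ∀ j, ∀ f ∈ F j, ∀ u, f u ∈ T j) :
    Ω D {f | ∀ j, f ∘ inclusion (hsub j) ∈ F j} = (List.ofFn fun j => Ω (Dm j) (F j)).prod := by
  induction n generalizing D with
  | zero =>
    obtain rfl : D = Dm 0 := by
      ext u
      simp [hD, Fin.exists_fin_one]
    simp only [List.ofFn_succ, List.ofFn_zero, List.prod_cons, List.prod_nil, mul_one]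
    congr 1
    ext f
    exact Fin.forall_fin_one
  | succ n ih =>
    set D₁ := ⋃ j : Fin (n + 1), Dm j.castSucc
    obtain rfl : D = D₁ ∪ Dm (Fin.last _) := by
      ext u
      simp [hD, D₁, Fin.exists_fin_succ']
    have hsplit : {f : ↥(D₁ ∪ Dm (Fin.last _)) → VH | ∀ j, f ∘ inclusion (hsub j) ∈ F j} =
        {f | f ∘ inclusion subset_union_left ∈ {g : ↥D₁ → VH | ∀ j : Fin (n + 1),
              g ∘ inclusion (subset_iUnion (fun j => Dm j.castSucc) j) ∈ F j.castSucc} ∧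
            f ∘ inclusion subset_union_right ∈ F (Fin.last _)} := by
      ext f
      exact Fin.forall_fin_succ'
    have hD₁ : Disjoint D₁ (Dm (Fin.last _)) :=
      disjoint_iUnion_left.2 fun j => hDm (Fin.castSucc_lt_last j).ne
    have hT₁ : Disjoint (⋃ j : Fin (n + 1), T j.castSucc) (T (Fin.last _)) :=
      disjoint_iUnion_left.2 fun j => hT (Fin.castSucc_lt_last j).ne
    rw [hsplit, hΩ _ _ hD₁ _ _ hT₁ _ _ ?maps (hFT _),
      ih D₁ (fun j => Dm j.castSucc) rfl _ (hDm.comp_of_injective (Fin.castSucc_injective _))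
        (fun j => T j.castSucc) (hT.comp_of_injective (Fin.castSucc_injective _))
        (fun j => F j.castSucc) (fun j => hFT j.castSucc), List.ofFn_succ' (n := n + 1),
      List.prod_concat]
    rintro g hg ⟨u, hu⟩
    obtain ⟨j, hj⟩ := mem_iUnion.1 hu
    exact mem_iUnion.2 ⟨j, hFT _ _ (hg j) ⟨u, hj⟩⟩

theorem IsAdditiveOnDisjoint.map_RSetOn_sumElim [Finite VG] (hΩ : IsAdditiveOnDisjoint Ω)
    (hΩ0 : ∀ D, Ω D ∅ = 0) {ι : Type*} {D : Set VG} {A : ι → Set VG} (hAD : ∀ i, A i ⊆ D)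
    (B : ι → Set VH) {S₀ : Set VG} (hS₀ : S₀ ⊆ D) {X Y : Set VH} (hXY : Disjoint X Y) :
    Ω D (RSetOn lG lH R D (Sum.elim A fun _ : Unit => S₀) (Sum.elim B fun _ : Unit => X ∪ Y)) =
      ∑ᶠ Sp ∈ {Sp | Sp ⊆ S₀ ∧ Feasible lG lH R (splitFamily A Sp (S₀ \ Sp)) (splitFamily B X Y)},
        Ω D (RSetOn lG lH R D (splitFamily A Sp (S₀ \ Sp)) (splitFamily B X Y)) := by
  rw [RSetOn_sumElim_union_eq_biUnion, hΩ.map_biUnion hΩ0 (toFinite _)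
    (pairwiseDisjoint_RSetOn_splitFamily lG lH R A B hS₀ hXY)]
  refine finsum_mem_inter_support_eq' _ _ _ fun Sp hne => ⟨fun hSp => ⟨hSp, ?_⟩, And.left⟩
  obtain ⟨f, hf⟩ : (RSetOn lG lH R D (splitFamily A Sp (S₀ \ Sp)) (splitFamily B X Y)).Nonempty :=
    nonempty_iff_ne_empty.2 fun h => hne (by simp only [h, hΩ0])
  refine feasible_of_mem_RSetOn lG lH R ?_ hf
  rintro (i | (_ | _))
  exacts [hAD i, sdiff_subset.trans hS₀, hSp.trans hS₀]

theorem IsMultiplicativeOnJoin.map_RSetOn (hΩ : IsMultiplicativeOnJoin Ω) {ι : Type*} {q : ℕ}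
    {D : Set VG} {S : ι → Set VG} {T : ι → Set VH} (hS : Pairwise (onFun Disjoint S))
    (hT : Pairwise (onFun Disjoint T)) (hD : D = ⋃ i, S i) (I : Fin (q + 1) → Set ι)
    (hI : ∀ i, ∃! j, i ∈ I j)
    (hcross : ∀ j j' : Fin (q + 1), j ≠ j' → ∀ i ∈ I j, ∀ i' ∈ I j', ∃ x : XH,
      ∀ u ∈ T i, ∀ v ∈ T i', lH u v = x)
    (hfeas : Feasible lG lH R S T) :
    Ω D (RSetOn lG lH R D S T) =
      (List.ofFn fun j => Ω (⋃ i : I j, S i)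
        (RSetOn lG lH R (⋃ i : I j, S i) (fun i : I j => S i) (fun i : I j => T i))).prod := by
  have hSD : ∀ i, S i ⊆ D := hD ▸ subset_iUnion S
  rw [RSetOn_eq_join lG lH R hSD hD.subset I (fun i => (hI i).exists) hcross hfeas]
  refine hΩ.map_join D _ ?_ _ (pairwise_disjoint_iUnion_blocks hS hI) (fun j => ⋃ i : I j, T i)
    (pairwise_disjoint_iUnion_blocks hT hI) _ ?_
  · ext u
    simp only [hD, mem_iUnion]
    refine ⟨fun ⟨i, hu⟩ => ?_, fun ⟨_, i, hu⟩ => ⟨i, hu⟩⟩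
    obtain ⟨j, hj⟩ := (hI i).exists
    exact ⟨j, ⟨i, hj⟩, hu⟩
  · rintro j f hf ⟨u, hu⟩
    obtain ⟨i, hi⟩ := mem_iUnion.1 hu
    exact mem_iUnion.2 ⟨i, hf.2 i _ hi⟩

end PreMorphism

theorem stmt_17_general {VG VH XG XH A : Type*} [Finite VG] [Semiring A]
    (lG : VG → VG → XG) (lH : VH → VH → XH) (R : Set (XG × XH))
    (Ω : (D : Set VG) → Set (↥D → VH) → A)
    (hΩ0 : ∀ D : Set VG, Ω D ∅ = 0)
    (hΩadd : ∀ (D : Set VG) (F₁ F₂ : Set (↥D → VH)), Disjoint F₁ F₂ →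
      Ω D (F₁ ∪ F₂) = Ω D F₁ + Ω D F₂)
    (hΩmul : ∀ (D₁ D₂ : Set VG), Disjoint D₁ D₂ → ∀ T₁ T₂ : Set VH, Disjoint T₁ T₂ →
      ∀ (F₁ : Set (↥D₁ → VH)) (F₂ : Set (↥D₂ → VH)),
      (∀ f ∈ F₁, ∀ u, f u ∈ T₁) → (∀ f ∈ F₂, ∀ u, f u ∈ T₂) →
      Ω (D₁ ∪ D₂)
          {f | f ∘ Set.inclusion (Set.subset_union_left (s := D₁) (t := D₂)) ∈ F₁ ∧
               f ∘ Set.inclusion (Set.subset_union_right (s := D₁) (t := D₂)) ∈ F₂} =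
        Ω D₁ F₁ * Ω D₂ F₂)
    {k q : ℕ} (Aset : Fin k → Set VG) (Bset : Fin k → Set VH)
    (S₀ : Set VG) (T₀ Tp Tp1 : Set VH)
    (hBdisj : Pairwise (Function.onFun Disjoint Bset))
    (hBTp : ∀ i, Disjoint (Bset i) T₀)
    (hT : Disjoint Tp Tp1) (hTU : Tp ∪ Tp1 = T₀)
    (hAdisj : Pairwise (Function.onFun Disjoint Aset))
    (hAS0 : ∀ i, Disjoint (Aset i) S₀)
    (I : Fin q → Set (Fin k ⊕ Bool))
    (hpart : ∀ i : Fin k ⊕ Bool, ∃! j : Fin q, i ∈ I j)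
    (hcross : ∀ j j' : Fin q, j ≠ j' → ∀ i ∈ I j, ∀ i' ∈ I j', ∃ x : XH,
      ∀ u ∈ Sum.elim Bset (fun b : Bool => bif b then Tp else Tp1) i,
      ∀ v ∈ Sum.elim Bset (fun b : Bool => bif b then Tp else Tp1) i', lH u v = x) :
    Ω (S₀ ∪ ⋃ i, Aset i)
        (RSetOn lG lH R (S₀ ∪ ⋃ i, Aset i)
          (Sum.elim Aset fun _ : Unit => S₀) (Sum.elim Bset fun _ : Unit => T₀)) =
      ∑ᶠ Sp ∈ {Sp : Set VG | Sp ⊆ S₀ ∧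
          Feasible lG lH R
            (Sum.elim Aset fun b : Bool => bif b then Sp else S₀ \ Sp)
            (Sum.elim Bset fun b : Bool => bif b then Tp else Tp1)},
        (List.ofFn fun j : Fin q =>
          Ω (⋃ i : ↥(I j),
              Sum.elim Aset (fun b : Bool => bif b then Sp else S₀ \ Sp) ↑i)
            (RSetOn lG lH R
              (⋃ i : ↥(I j),
                Sum.elim Aset (fun b : Bool => bif b then Sp else S₀ \ Sp) ↑i)
              (fun i : ↥(I j) =>
                Sum.elim Aset (fun b : Bool => bif b then Sp else S₀ \ Sp) ↑i)
              (fun i : ↥(I j) =>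
                Sum.elim Bset (fun b : Bool => bif b then Tp else Tp1) ↑i))).prod := by
  obtain ⟨j, -⟩ := (hpart (Sum.inr true)).exists
  obtain ⟨q, rfl⟩ := Nat.exists_eq_add_one_of_ne_zero j.pos.ne'
  subst hTU
  rw [IsAdditiveOnDisjoint.map_RSetOn_sumElim lG lH R hΩadd hΩ0
    (fun i => (subset_iUnion Aset i).trans subset_union_right) Bset subset_union_left hT]
  refine finsum_mem_congr rfl fun Sp ⟨hSp, hfeas⟩ =>
    IsMultiplicativeOnJoin.map_RSetOn lG lH R hΩmul ?_ ?_ ?_ I hpart hcross hfeas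
  · exact pairwise_disjoint_splitFamily hAdisj
      (fun i => (hAS0 i).mono_right (union_subset hSp sdiff_subset)) disjoint_sdiff_right
  · exact pairwise_disjoint_splitFamily hBdisj hBTp hT
  · rw [iUnion_splitFamily, union_sdiff_cancel hSp, union_comm]

/-- The recurrence of the fine-grained algorithm: for a pre-morphism `Ω` into a semiring
`A` (additive on disjoint unions, multiplicative on joins with disjoint domains and
disjoint codomains, sending `∅` to `0`), and for `T₁,…,T_{p-1},T_p,T_{p+1}` pairwise
disjoint nonempty subsets of `V_H` forming a union of `e`-connected components
`I₁,…,I_q` of a contraction of `H` (with `T₀ = T_p ⊎ T_{p+1}`), and pairwise disjoint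
`S₀, S₁,…,S_{p-1} ⊆ V_G`:
`Ω(R^{S₁,…,S_{p-1},S₀}_{T₁,…,T_{p-1},T₀})` equals the sum over partitions
`S_p ⊎ S_{p+1} = S₀` (parametrized by `S_p ⊆ S₀`, with `S_{p+1} = S₀ \ S_p`) that are
`R`-feasible, of the product over components `j` of
`Ω(R^{(S₁,…,S_{p+1})_{I_j}}_{(T₁,…,T_{p+1})_{I_j}})`. Indices: `Sum.inl i ↦ (Sᵢ, Tᵢ)`,
`Sum.inr true ↦ (S_p, T_p)`, `Sum.inr false ↦ (S_{p+1}, T_{p+1})`. -/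
theorem stmt_17 {VG VH XG XH A : Type*} [Finite VG] [Semiring A]
    (lG : VG → VG → XG) (lH : VH → VH → XH) (R : Set (XG × XH))
    (Ω : (D : Set VG) → Set (↥D → VH) → A)
    (hΩ0 : ∀ D : Set VG, Ω D ∅ = 0)
    (hΩadd : ∀ (D : Set VG) (F₁ F₂ : Set (↥D → VH)), Disjoint F₁ F₂ →
      Ω D (F₁ ∪ F₂) = Ω D F₁ + Ω D F₂)
    (hΩmul : ∀ (D₁ D₂ : Set VG), Disjoint D₁ D₂ → ∀ T₁ T₂ : Set VH, Disjoint T₁ T₂ →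
      ∀ (F₁ : Set (↥D₁ → VH)) (F₂ : Set (↥D₂ → VH)),
      (∀ f ∈ F₁, ∀ u, f u ∈ T₁) → (∀ f ∈ F₂, ∀ u, f u ∈ T₂) →
      Ω (D₁ ∪ D₂)
          {f | f ∘ Set.inclusion (Set.subset_union_left (s := D₁) (t := D₂)) ∈ F₁ ∧
               f ∘ Set.inclusion (Set.subset_union_right (s := D₁) (t := D₂)) ∈ F₂} =
        Ω D₁ F₁ * Ω D₂ F₂)
    {k q : ℕ} (hq : 1 ≤ q)
    (Aset : Fin k → Set VG) (Bset : Fin k → Set VH)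
    (S₀ : Set VG) (T₀ Tp Tp1 : Set VH)
    (hBne : ∀ i, (Bset i).Nonempty) (hTpne : Tp.Nonempty) (hTp1ne : Tp1.Nonempty)
    (hBdisj : Pairwise (Function.onFun Disjoint Bset))
    (hBTp : ∀ i, Disjoint (Bset i) T₀)
    (hT : Disjoint Tp Tp1) (hTU : Tp ∪ Tp1 = T₀)
    (hAdisj : Pairwise (Function.onFun Disjoint Aset))
    (hAS0 : ∀ i, Disjoint (Aset i) S₀)
    (I : Fin q → Set (Fin k ⊕ Bool))
    (hpart : ∀ i : Fin k ⊕ Bool, ∃! j : Fin q, i ∈ I j)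
    (hcross : ∀ j j' : Fin q, j ≠ j' → ∀ i ∈ I j, ∀ i' ∈ I j', ∃ x : XH,
      ∀ u ∈ Sum.elim Bset (fun b : Bool => bif b then Tp else Tp1) i,
      ∀ v ∈ Sum.elim Bset (fun b : Bool => bif b then Tp else Tp1) i', lH u v = x)
    (hconn : ∀ j : Fin q, ∀ i ∈ I j, ∀ i' ∈ I j,
      Relation.ReflTransGen (fun a b : Fin k ⊕ Bool => a ∈ I j ∧ b ∈ I j ∧
        (¬ (∃ x : XH, ∀ u ∈ Sum.elim Bset (fun c : Bool => bif c then Tp else Tp1) a,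
              ∀ v ∈ Sum.elim Bset (fun c : Bool => bif c then Tp else Tp1) b,
              lH u v = x) ∨
         ¬ (∃ x : XH, ∀ u ∈ Sum.elim Bset (fun c : Bool => bif c then Tp else Tp1) b,
              ∀ v ∈ Sum.elim Bset (fun c : Bool => bif c then Tp else Tp1) a,
              lH u v = x))) i i') :
    Ω (S₀ ∪ ⋃ i, Aset i)
        (RSetOn lG lH R (S₀ ∪ ⋃ i, Aset i)
          (Sum.elim Aset fun _ : Unit => S₀) (Sum.elim Bset fun _ : Unit => T₀)) =
      ∑ᶠ Sp ∈ {Sp : Set VG | Sp ⊆ S₀ ∧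
          Feasible lG lH R
            (Sum.elim Aset fun b : Bool => bif b then Sp else S₀ \ Sp)
            (Sum.elim Bset fun b : Bool => bif b then Tp else Tp1)},
        (List.ofFn fun j : Fin q =>
          Ω (⋃ i : ↥(I j),
              Sum.elim Aset (fun b : Bool => bif b then Sp else S₀ \ Sp) ↑i)
            (RSetOn lG lH R
              (⋃ i : ↥(I j),
                Sum.elim Aset (fun b : Bool => bif b then Sp else S₀ \ Sp) ↑i)
              (fun i : ↥(I j) =>
                Sum.elim Aset (fun b : Bool => bif b then Sp else S₀ \ Sp) ↑i)
              (fun i : ↥(I j) =>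
                Sum.elim Bset (fun b : Bool => bif b then Tp else Tp1) ↑i))).prod :=
  stmt_17_general lG lH R Ω hΩ0 hΩadd hΩmul Aset Bset S₀ T₀ Tp Tp1 hBdisj hBTp hT hTU hAdisj hAS0 I
    hpart hcross
end

section
/- Every graph of component twin-width 1 is a cograph: if a loopless undirected graph H on n ≥ 1 vertices admits a contraction sequence (H_n,…,H_1) in which every e-connected component of every H_k (k < n) has size at most 1 (equivalently, no e-labelled pair ever appears), then H is a cograph. -/
/-- Every graph of component twin-width 1 is a cograph: if a (simple) graph `H` on
`n ≥ 1` vertices admits a contraction sequence — a sequence of partitions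
`𝒫_n, …, 𝒫_1` of the vertex set, with `𝒫_n` the partition into singletons, `𝒫_1 = {V}`,
`|𝒫_k| = k`, each `𝒫_k` obtained from `𝒫_{k+1}` by merging two parts — in which no
`e`-labelled pair ever appears (every pair of distinct parts of every `𝒫_k` is fully
adjacent or fully non-adjacent), then `H` is a cograph: every subset `S` of vertices
with `|S| ≥ 2` contains a pair of twins. -/
theorem stmt_18 {V : Type*} [Fintype V] [Nonempty V] (H : SimpleGraph V)
    (P : ℕ → Set (Set V))
    (hsingl : P (Fintype.card V) = {s : Set V | ∃ v : V, s = {v}})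
    (hone : P 1 = {Set.univ})
    (hpartn : ∀ k ∈ Finset.Icc 1 (Fintype.card V),
      ∀ v : V, ∃! s : Set V, s ∈ P k ∧ v ∈ s)
    (hcard : ∀ k ∈ Finset.Icc 1 (Fintype.card V), (P k).ncard = k)
    (hmerge : ∀ k ∈ Finset.Icc 1 (Fintype.card V - 1),
      ∃ s ∈ P (k + 1), ∃ t ∈ P (k + 1), s ≠ t ∧
        P k = (P (k + 1) \ {s, t}) ∪ {s ∪ t})
    (hnoe : ∀ k ∈ Finset.Icc 1 (Fintype.card V), ∀ s ∈ P k, ∀ t ∈ P k, s ≠ t →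
      ((∀ u ∈ s, ∀ v ∈ t, H.Adj u v) ∨ (∀ u ∈ s, ∀ v ∈ t, ¬ H.Adj u v))) :
    ∀ S : Set V, 2 ≤ S.ncard → ∃ u ∈ S, ∃ v ∈ S, u ≠ v ∧
      ∀ w ∈ S, w ≠ u → w ≠ v → (H.Adj u w ↔ H.Adj v w) := by
  classical
  intro S hS
  set n := Fintype.card V with hn
  have hn1 : 1 ≤ n := Fintype.card_pos
  obtain ⟨a, ha, b, hb, hab⟩ : ∃ a ∈ S, ∃ b ∈ S, a ≠ b :=
    (Set.one_lt_ncard (Set.toFinite S)).mp (by omega)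
  set T : Finset ℕ := (Finset.Icc 1 n).filter
    (fun k => ∃ p ∈ P k, ∃ x ∈ p ∩ S, ∃ y ∈ p ∩ S, x ≠ y) with hT
  have h1T : 1 ∈ T := by
    refine Finset.mem_filter.2 ⟨Finset.mem_Icc.2 ⟨le_refl _, hn1⟩, Set.univ, ?_, a, ⟨trivial, ha⟩, b, ⟨trivial, hb⟩, hab⟩
    rw [hone]; rfl
  have hnT : n ∉ T := by
    intro h
    obtain ⟨-, p, hp, x, hx, y, hy, hxy⟩ := Finset.mem_filter.1 h
    rw [hsingl] at hp
    obtain ⟨v, rfl⟩ := hp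
    exact hxy (hx.1.trans hy.1.symm)
  have hTne : T.Nonempty := ⟨1, h1T⟩
  set m := T.max' hTne with hm
  have hmT : m ∈ T := T.max'_mem hTne
  obtain ⟨hmI, p, hp, x, hx, y, hy, hxy⟩ := Finset.mem_filter.1 hmT
  obtain ⟨hm1le, hmlen⟩ := Finset.mem_Icc.1 hmI
  have hmn : m < n := lt_of_le_of_ne hmlen (fun h => hnT (h ▸ hmT))
  have hm1 : m + 1 ∉ T := fun h => absurd (T.le_max' _ h) (by omega)
  have hnot : ∀ p ∈ P (m+1), ∀ x ∈ p ∩ S, ∀ y ∈ p ∩ S, x = y := by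
    intro p hp x hx y hy
    by_contra hne
    exact hm1 (Finset.mem_filter.2 ⟨Finset.mem_Icc.2 ⟨by omega, by omega⟩,
      p, hp, x, hx, y, hy, hne⟩)
  obtain ⟨s, hs, t, ht, hst, hPm⟩ := hmerge m (Finset.mem_Icc.2 ⟨hm1le, by omega⟩)
  have hm1I : m + 1 ∈ Finset.Icc 1 n := Finset.mem_Icc.2 ⟨by omega, by omega⟩
  have hdisj : ∀ z, z ∈ s → z ∈ t → False := by
    intro z hzs hzt
    obtain ⟨q, hq, hq'⟩ := hpartn (m+1) hm1I z
    exact hst ((hq' s ⟨hs, hzs⟩).trans (hq' t ⟨ht, hzt⟩).symm)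
  have hp' : p = s ∪ t := by
    rw [hPm] at hp
    rcases hp with h | h
    · exact absurd (hnot p h.1 x hx y hy) hxy
    · exact h
  have hstm : s ∪ t ∈ P m := by rw [hPm]; exact Or.inr rfl
  have key : ∀ u v : V, u ∈ s → u ∈ S → v ∈ t → v ∈ S →
      ∃ u ∈ S, ∃ v ∈ S, u ≠ v ∧
      ∀ w ∈ S, w ≠ u → w ≠ v → (H.Adj u w ↔ H.Adj v w) := by
    intro u v hus huS hvt hvS
    refine ⟨u, huS, v, hvS, fun h => hdisj u hus (h ▸ hvt), ?_⟩
    intro w hwS hwu hwv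
    obtain ⟨r, ⟨hr, hwr⟩, -⟩ := hpartn (m+1) hm1I w
    have hrs : r ≠ s := fun h => hwu (hnot s hs w ⟨h ▸ hwr, hwS⟩ u ⟨hus, huS⟩)
    have hrt : r ≠ t := fun h => hwv (hnot t ht w ⟨h ▸ hwr, hwS⟩ v ⟨hvt, hvS⟩)
    have hrm : r ∈ P m := by
      rw [hPm]; left; exact ⟨hr, by simp [hrs, hrt]⟩
    have hrst : s ∪ t ≠ r := by
      intro h
      exact hwu (hnot r hr w ⟨hwr, hwS⟩ u ⟨h ▸ Or.inl hus, huS⟩)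
    rcases hnoe m hmI (s ∪ t) hstm r hrm hrst with hadj | hnadj
    · exact ⟨fun _ => hadj v (Or.inr hvt) w hwr, fun _ => hadj u (Or.inl hus) w hwr⟩
    · exact ⟨fun h => absurd h (hnadj u (Or.inl hus) w hwr),
        fun h => absurd h (hnadj v (Or.inr hvt) w hwr)⟩
  subst hp'
  rcases hx.1 with hxs | hxt
  · rcases hy.1 with hys | hyt
    · exact absurd (hnot s hs x ⟨hxs, hx.2⟩ y ⟨hys, hy.2⟩) hxy
    · exact key x y hxs hx.2 hyt hy.2
  · rcases hy.1 with hys | hyt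
    · exact key y x hys hy.2 hxt hx.2
    · exact absurd (hnot t ht x ⟨hxt, hx.2⟩ y ⟨hyt, hy.2⟩) hxy
end
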